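/- (Scaling of the 3D example data.) For n ∈ ℕ and B > 0, define p₀(x) = n^{−5/4}[sin(r/n − π/2) + 1] + B for 2nπ ≤ r ≤ 4nπ and p₀ = B otherwise (r = |x|, x ∈ ℝ³), and v₀(x) = n^{−5/4}[sin(r/n − π/2) + 1] (x/r) on the same annulus, 0 otherwise. Then there exist constants 0 < c < C independent of n such that c n^{1/2} ≤ ‖p₀ − B‖²_{L²(ℝ³)} ≤ C n^{1/2} and c n^{−3/2} ≤ ‖∇p₀‖²_{L²(ℝ³)} ≤ C n^{−3/2}. Consequently, the product N₁κ ≍ n^{−1} → 0 as n → ∞ while ‖p₀ − B‖²_{L²} ≍ n^{1/2} → ∞. -/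

import Mathlib

open MeasureTheory Real Filter

noncomputable section

abbrev E3 := EuclideanSpace ℝ (Fin 3)

/-- divergence of a vector field on `ℝ³` -/
def div3 (w : E3 → E3) (x : E3) : ℝ :=
  ∑ i, fderiv ℝ (fun y => w y i) x (EuclideanSpace.single i 1)

/-- the example density perturbation: a slowly modulated radial bump of amplitude
`n^{-5/4}` supported on the annulus `2nπ ≤ |x| ≤ 4nπ`, on top of the background `B` -/
def pex (n : ℕ) (B : ℝ) (x : E3) : ℝ :=
  if 2 * n * π ≤ ‖x‖ ∧ ‖x‖ ≤ 4 * n * π then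
    (n : ℝ) ^ (-(5 : ℝ) / 4) * (Real.sin (‖x‖ / n - π / 2) + 1) + B
  else B

/-- the example (radial, hence curl-free) velocity field -/
def vex (n : ℕ) (x : E3) : E3 :=
  if 2 * n * π ≤ ‖x‖ ∧ ‖x‖ ≤ 4 * n * π then
    (((n : ℝ) ^ (-(5 : ℝ) / 4) * (Real.sin (‖x‖ / n - π / 2) + 1)) / ‖x‖) • x
  else 0

/-! All the data are radial and supported on the annulus `2nπ ≤ |x| ≤ 4nπ`, so each squared
`L²` norm is, in polar coordinates, `|S²| ∫ r² f(r)² dr` for a radial profile `f`: the amplitude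
for `p₀ - B` and `v₀`, its derivative for `∇p₀`, and `f' + 2f/r` for `div v₀`. Every such
profile has the form `n^α G(r/n)`, so the substitution `r = n t` makes the integral exactly
`n^(2α+3)` times an integral over `[2π, 4π]` that does not depend on `n`. -/

open Topology Set

section RadialCalculus

variable {F : Type*} [NormedAddCommGroup F] [InnerProductSpace ℝ F] {x : F}

theorem hasFDerivAt_norm (hx : x ≠ 0) :
    HasFDerivAt (fun y : F => ‖y‖) (‖x‖⁻¹ • innerSL ℝ x) x := by
  have hsq : HasFDerivAt (fun y : F => ‖y‖ ^ 2) (2 • innerSL ℝ x) x := by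
    simpa using (hasFDerivAt_id x).norm_sq
  have hsqrt := (hasDerivAt_sqrt (pow_ne_zero 2 (norm_ne_zero_iff.mpr hx))).comp_hasFDerivAt x hsq
  simp only [Function.comp_def, sqrt_sq (norm_nonneg _)] at hsqrt
  refine hsqrt.congr_fderiv ?_
  ext y
  simp only [one_div, mul_inv_rev, smul_apply, coe_innerSL_apply, nsmul_eq_mul, Nat.cast_ofNat,
    smul_eq_mul]
  ring

theorem norm_div_norm_smul (hx : x ≠ 0) (a : ℝ) : ‖(a / ‖x‖) • x‖ = |a| := by
  rw [norm_smul, norm_div, norm_norm, div_mul_cancel₀ _ (norm_ne_zero_iff.mpr hx),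
    Real.norm_eq_abs]

theorem HasDerivAt.hasGradientAt_comp_norm [CompleteSpace F] {g : ℝ → ℝ} {g' : ℝ}
    (hg : HasDerivAt g g' ‖x‖) (hx : x ≠ 0) :
    HasGradientAt (fun y : F => g ‖y‖) ((g' / ‖x‖) • x) x := by
  rw [hasGradientAt_iff_hasFDerivAt]
  refine (hg.comp_hasFDerivAt x (hasFDerivAt_norm hx)).congr_fderiv ?_
  ext y
  simp only [smul_apply, coe_innerSL_apply, smul_eq_mul, div_eq_inv_mul, map_smul,
    InnerProductSpace.toDual_apply_apply]
  ring

end RadialCalculus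

theorem ite_annulus_eventuallyEq {E β : Type*} [SeminormedAddCommGroup E] {x : E} {a b : ℝ}
    (u v : E → β) (ha : ‖x‖ ≠ a) (hb : ‖x‖ ≠ b) :
    (fun y => if a ≤ ‖y‖ ∧ ‖y‖ ≤ b then u y else v y)
      =ᶠ[𝓝 x] if a ≤ ‖x‖ ∧ ‖x‖ ≤ b then u else v := by
  have hnorm := continuous_norm.continuousAt (x := x)
  by_cases hx : a ≤ ‖x‖ ∧ ‖x‖ ≤ b
  · have hIoo : ‖x‖ ∈ Ioo a b := ⟨lt_of_le_of_ne hx.1 ha.symm, lt_of_le_of_ne hx.2 hb⟩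
    filter_upwards [hnorm.preimage_mem_nhds (isOpen_Ioo.mem_nhds hIoo)] with y hy
    simp [hx, hy.1.le, hy.2.le]
  · have hIcc : ‖x‖ ∈ (Icc a b)ᶜ := hx
    filter_upwards [hnorm.preimage_mem_nhds (isClosed_Icc.isOpen_compl.mem_nhds hIcc)] with y hy
    simp only [if_neg hx]
    exact if_neg hy

theorem div3_congr {w₁ w₂ : E3 → E3} {x : E3} (h : w₁ =ᶠ[𝓝 x] w₂) :
    div3 w₁ x = div3 w₂ x := by
  unfold div3
  refine Finset.sum_congr rfl fun i _ => ?_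
  have hi : (fun y => w₁ y i) =ᶠ[𝓝 x] fun y => w₂ y i := h.mono fun y hy => by simp only [hy]
  rw [hi.fderiv_eq]

theorem div3_radial_smul {ψ : ℝ → ℝ} {ψ' : ℝ} {x : E3} (hx : x ≠ 0)
    (hψ : HasDerivAt ψ ψ' ‖x‖) :
    div3 (fun y => ψ ‖y‖ • y) x = 3 * ψ ‖x‖ + ‖x‖ * ψ' := by
  have hcoord (i : Fin 3) :
      fderiv ℝ (fun y : E3 => (ψ ‖y‖ • y) i) x (EuclideanSpace.single i 1)
        = ψ ‖x‖ + ψ' * ‖x‖⁻¹ * x i ^ 2 := by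
    have h : HasFDerivAt (fun y : E3 => ψ ‖y‖ * y i) _ x :=
      (hψ.comp_hasFDerivAt x (hasFDerivAt_norm hx)).mul
      (EuclideanSpace.proj i : E3 →L[ℝ] ℝ).hasFDerivAt
    simp only [PiLp.smul_apply, smul_eq_mul]
    rw [h.fderiv]
    simp only [Function.comp_apply, add_apply, smul_apply, PiLp.proj_apply, PiLp.single_eq_same,
      smul_eq_mul, mul_one, coe_innerSL_apply, EuclideanSpace.inner_single_right, ringHom_apply]
    ring
  have hsum : ∑ i : Fin 3, x i ^ 2 = ‖x‖ ^ 2 := (EuclideanSpace.real_norm_sq_eq x).symm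
  unfold div3
  simp only [hcoord, Finset.sum_add_distrib, ← Finset.mul_sum, hsum]
  field_simp [norm_ne_zero_iff.mpr hx]
  simp only [Finset.sum_const, Finset.card_univ, Fintype.card_fin, nsmul_eq_mul]
  ring

section RadialIntegration

variable {E : Type*} [NormedAddCommGroup E] [NormedSpace ℝ E] [Nontrivial E]
  [FiniteDimensional ℝ E] [MeasurableSpace E] [BorelSpace E]
  (μ : Measure E) [μ.IsAddHaarMeasure]

theorem ae_norm_ne (a : ℝ) : ∀ᵐ x ∂μ, ‖x‖ ≠ a := by
  refine measure_mono_null (fun x hx => ?_) (Measure.addHaar_sphere μ 0 a)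
  simpa using hx

theorem integral_ite_annulus {a b : ℝ} (ha : 0 < a) (hab : a ≤ b) (φ : ℝ → ℝ) :
    ∫ x, (if a ≤ ‖x‖ ∧ ‖x‖ ≤ b then φ ‖x‖ else 0) ∂μ
      = Module.finrank ℝ E * μ.real (Metric.ball 0 1)
        * ∫ r in a..b, r ^ (Module.finrank ℝ E - 1) * φ r := by
  have hind : (fun r : ℝ => r ^ (Module.finrank ℝ E - 1) * if a ≤ r ∧ r ≤ b then φ r else 0)
      = (Icc a b).indicator fun r => r ^ (Module.finrank ℝ E - 1) * φ r := by
    ext r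
    by_cases hr : a ≤ r ∧ r ≤ b <;> simp [hr]
  rw [integral_fun_norm_addHaar μ (fun r => if a ≤ r ∧ r ≤ b then φ r else 0), nsmul_eq_mul,
    smul_eq_mul, mul_assoc]
  simp only [smul_eq_mul, hind, setIntegral_indicator measurableSet_Icc,
    inter_eq_right.mpr (Icc_subset_Ioi_iff hab |>.mpr ha), integral_Icc_eq_integral_Ioc,
    ← intervalIntegral.integral_of_le hab]

end RadialIntegration

theorem integral_ite_annulus_euclidean {a b : ℝ} (ha : 0 < a) (hab : a ≤ b) (φ : ℝ → ℝ) :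
    ∫ x : E3, (if a ≤ ‖x‖ ∧ ‖x‖ ≤ b then φ ‖x‖ else 0)
      = 3 * volume.real (Metric.ball (0 : E3) 1) * ∫ r in a..b, r ^ 2 * φ r := by
  rw [integral_ite_annulus volume ha hab, finrank_euclideanSpace_fin]
  norm_num

theorem integral_sq_rescale {s : ℝ} (hs : 0 < s) (α a b : ℝ) (G : ℝ → ℝ) :
    ∫ r in s * a..s * b, r ^ 2 * (s ^ α * G (r / s)) ^ 2
      = s ^ (2 * α + 3) * ∫ t in a..b, t ^ 2 * G t ^ 2 := by
  have hpow : s ^ (2 * α + 3) = s ^ (2 * α + 2) * s := by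
    rw [← rpow_add_one hs.ne']
    ring_nf
  have hint (r : ℝ) : r ^ 2 * (s ^ α * G (r / s)) ^ 2
      = s ^ (2 * α + 2) * ((r / s) ^ 2 * G (r / s) ^ 2) := by
    rw [rpow_add hs, mul_comm 2 α, rpow_mul hs.le, rpow_two, rpow_two]
    field_simp
  simp only [hint, intervalIntegral.integral_const_mul,
    intervalIntegral.integral_comp_div (fun t => t ^ 2 * G t ^ 2) hs.ne',
    mul_div_cancel_left₀ _ hs.ne', hpow, smul_eq_mul]
  ring

def bump (t : ℝ) : ℝ := sin (t - π / 2) + 1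

def radialMoment (G : ℝ → ℝ) : ℝ := ∫ t in (2 * π)..(4 * π), t ^ 2 * G t ^ 2

theorem radialMoment_pos {G : ℝ → ℝ} (hG : Continuous G) {t₀ : ℝ}
    (ht₀ : t₀ ∈ Ioo (2 * π) (4 * π)) (hGt₀ : G t₀ ≠ 0) : 0 < radialMoment G := by
  have hf : Continuous fun t => t ^ 2 * G t ^ 2 := by fun_prop
  rw [radialMoment, intervalIntegral.integral_pos_iff_support_of_nonneg_ae'
    (ae_of_all _ fun t => by positivity) (hf.intervalIntegrable _ _)]
  refine ⟨by linarith [pi_pos], ?_⟩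
  have hopen := hf.isOpen_support.inter (isOpen_Ioo (a := 2 * π) (b := 4 * π))
  have ht₀_pos : t₀ ≠ 0 := (lt_trans two_pi_pos ht₀.1).ne'
  have hmem : t₀ ∈ Function.support (fun t => t ^ 2 * G t ^ 2) ∩ Ioo (2 * π) (4 * π) :=
    ⟨by simp [ht₀_pos, hGt₀], ht₀⟩
  exact (hopen.measure_pos volume ⟨t₀, hmem⟩).trans_le
    (measure_mono (inter_subset_inter_right _ Ioo_subset_Ioc_self))

theorem integral_sq_ite_annulus_rescale {s : ℝ} (hs : 0 < s) (α : ℝ) (G : ℝ → ℝ) :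
    ∫ x : E3, (if 2 * s * π ≤ ‖x‖ ∧ ‖x‖ ≤ 4 * s * π then (s ^ α * G (‖x‖ / s)) ^ 2 else 0)
      = 3 * volume.real (Metric.ball (0 : E3) 1) * radialMoment G * s ^ (2 * α + 3) := by
  rw [integral_ite_annulus_euclidean (by positivity) (by nlinarith [pi_pos])
      fun r => (s ^ α * G (r / s)) ^ 2,
    show 2 * s * π = s * (2 * π) by ring, show 4 * s * π = s * (4 * π) by ring,
    integral_sq_rescale hs, radialMoment]
  ring

theorem rpow_neg_nine_fourths_mul_self {s : ℝ} (hs : 0 < s) :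
    s ^ (-(9 : ℝ) / 4) * s = s ^ (-(5 : ℝ) / 4) := by
  rw [← rpow_add_one hs.ne']
  norm_num

theorem hasDerivAt_rescaled_bump {s : ℝ} (hs : 0 < s) (r : ℝ) :
    HasDerivAt (fun r => s ^ (-(5 : ℝ) / 4) * bump (r / s))
      (s ^ (-(9 : ℝ) / 4) * cos (r / s - π / 2)) r := by
  have hbump : HasDerivAt (fun t => sin (t - π / 2) + 1) (cos (r / s - π / 2)) (r / s) := by
    simpa using
      ((hasDerivAt_sin _).comp (r / s) ((hasDerivAt_id' _).sub_const (π / 2))).add_const 1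
  refine ((hbump.comp r ((hasDerivAt_id r).div_const s)).const_mul _).congr_deriv ?_
  rw [← rpow_neg_nine_fourths_mul_self hs]
  field_simp

theorem pex_sub_sq (n : ℕ) (B : ℝ) (x : E3) :
    (pex n B x - B) ^ 2 = if 2 * n * π ≤ ‖x‖ ∧ ‖x‖ ≤ 4 * n * π
      then ((n : ℝ) ^ (-(5 : ℝ) / 4) * bump (‖x‖ / n)) ^ 2 else 0 := by
  unfold pex bump
  split_ifs <;> ring

theorem norm_vex_sq (n : ℕ) {x : E3} (hx : x ≠ 0) :
    ‖vex n x‖ ^ 2 = if 2 * n * π ≤ ‖x‖ ∧ ‖x‖ ≤ 4 * n * π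
      then ((n : ℝ) ^ (-(5 : ℝ) / 4) * bump (‖x‖ / n)) ^ 2 else 0 := by
  unfold vex
  split_ifs
  · rw [norm_div_norm_smul hx, sq_abs, bump]
  · simp

theorem norm_gradient_pex_sq (B : ℝ) {n : ℕ} (hn : 0 < n) {x : E3} (hx : x ≠ 0)
    (h2 : ‖x‖ ≠ 2 * n * π) (h4 : ‖x‖ ≠ 4 * n * π) :
    ‖gradient (pex n B) x‖ ^ 2 = if 2 * n * π ≤ ‖x‖ ∧ ‖x‖ ≤ 4 * n * π
      then ((n : ℝ) ^ (-(9 : ℝ) / 4) * cos (‖x‖ / n - π / 2)) ^ 2 else 0 := by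
  have hloc : pex n B =ᶠ[𝓝 x] _ :=
    ite_annulus_eventuallyEq (fun y => (n : ℝ) ^ (-(5 : ℝ) / 4) * bump (‖y‖ / n) + B)
      (fun _ => B) h2 h4
  rw [hloc.gradient_eq]
  split_ifs
  · have hgrad := ((hasDerivAt_rescaled_bump (Nat.cast_pos.mpr hn) ‖x‖).add_const B
      ).hasGradientAt_comp_norm hx
    rw [hgrad.gradient, norm_div_norm_smul hx, sq_abs]
  · simp [gradient_fun_const]

theorem div3_vex {n : ℕ} (hn : 0 < n) {x : E3} (hx : x ≠ 0)
    (h2 : ‖x‖ ≠ 2 * n * π) (h4 : ‖x‖ ≠ 4 * n * π) :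
    div3 (vex n) x = if 2 * n * π ≤ ‖x‖ ∧ ‖x‖ ≤ 4 * n * π
      then (n : ℝ) ^ (-(9 : ℝ) / 4) * (cos (‖x‖ / n - π / 2) + 2 * bump (‖x‖ / n) / (‖x‖ / n))
      else 0 := by
  have hs : (0 : ℝ) < n := Nat.cast_pos.mpr hn
  have hloc : vex n =ᶠ[𝓝 x] _ :=
    ite_annulus_eventuallyEq
      (fun y => ((n : ℝ) ^ (-(5 : ℝ) / 4) * bump (‖y‖ / n) / ‖y‖) • y) (fun _ => 0) h2 h4
  rw [div3_congr hloc]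
  split_ifs
  · have hr : ‖x‖ ≠ 0 := norm_ne_zero_iff.mpr hx
    have hψ : HasDerivAt (fun r => (n : ℝ) ^ (-(5 : ℝ) / 4) * bump (r / n) / r) _ ‖x‖ :=
      (hasDerivAt_rescaled_bump hs ‖x‖).div (hasDerivAt_id' _) hr
    rw [div3_radial_smul hx hψ, ← rpow_neg_nine_fourths_mul_self hs]
    field_simp
    ring
  · simp [div3]

theorem ae_norm_ne_annulus_boundary (n : ℕ) :
    ∀ᵐ x : E3, x ≠ 0 ∧ ‖x‖ ≠ 2 * n * π ∧ ‖x‖ ≠ 4 * n * π := by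
  filter_upwards [ae_norm_ne volume 0, ae_norm_ne volume (2 * n * π),
    ae_norm_ne volume (4 * n * π)] with x h0 h2 h4
  exact ⟨norm_ne_zero_iff.mp h0, h2, h4⟩

section ScalingLaws

variable {n : ℕ}

theorem integral_pex_sub_sq (hn : 0 < n) (B : ℝ) :
    ∫ x, (pex n B x - B) ^ 2 = 3 * volume.real (Metric.ball (0 : E3) 1) * radialMoment bump
      * (n : ℝ) ^ ((1 : ℝ) / 2) := by
  simp_rw [pex_sub_sq]
  rw [integral_sq_ite_annulus_rescale (Nat.cast_pos.mpr hn)]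
  norm_num

theorem integral_norm_vex_sq (hn : 0 < n) :
    ∫ x, ‖vex n x‖ ^ 2 = 3 * volume.real (Metric.ball (0 : E3) 1) * radialMoment bump
      * (n : ℝ) ^ ((1 : ℝ) / 2) := by
  rw [integral_congr_ae ((ae_norm_ne_annulus_boundary n).mono fun x hx => norm_vex_sq n hx.1),
    integral_sq_ite_annulus_rescale (Nat.cast_pos.mpr hn)]
  norm_num

theorem integral_norm_gradient_pex_sq (hn : 0 < n) (B : ℝ) :
    ∫ x, ‖gradient (pex n B) x‖ ^ 2 = 3 * volume.real (Metric.ball (0 : E3) 1)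
      * radialMoment (fun t => cos (t - π / 2)) * (n : ℝ) ^ (-(3 : ℝ) / 2) := by
  rw [integral_congr_ae ((ae_norm_ne_annulus_boundary n).mono fun x hx =>
      norm_gradient_pex_sq B hn hx.1 hx.2.1 hx.2.2),
    integral_sq_ite_annulus_rescale (Nat.cast_pos.mpr hn) _ fun t => cos (t - π / 2)]
  norm_num

theorem integral_div3_vex_sq (hn : 0 < n) :
    ∫ x, div3 (vex n) x ^ 2 = 3 * volume.real (Metric.ball (0 : E3) 1)
      * radialMoment (fun t => cos (t - π / 2) + 2 * bump t / t)
      * (n : ℝ) ^ (-(3 : ℝ) / 2) := by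
  have hsq : (fun x => div3 (vex n) x ^ 2) =ᵐ[volume] fun x : E3 =>
      if 2 * n * π ≤ ‖x‖ ∧ ‖x‖ ≤ 4 * n * π then ((n : ℝ) ^ (-(9 : ℝ) / 4)
        * (cos (‖x‖ / n - π / 2) + 2 * bump (‖x‖ / n) / (‖x‖ / n))) ^ 2 else 0 := by
    filter_upwards [ae_norm_ne_annulus_boundary n] with x hx
    rw [div3_vex hn hx.1 hx.2.1 hx.2.2]
    split_ifs <;> simp
  rw [integral_congr_ae hsq, integral_sq_ite_annulus_rescale (Nat.cast_pos.mpr hn) _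
    fun t => cos (t - π / 2) + 2 * bump t / t]
  norm_num

end ScalingLaws

theorem radialMoment_bump_pos : 0 < radialMoment bump := by
  refine radialMoment_pos (by unfold bump; fun_prop) (t₀ := 3 * π)
    ⟨by linarith [pi_pos], by linarith [pi_pos]⟩ ?_
  rw [bump, show 3 * π - π / 2 = π / 2 + 2 * π by ring, sin_add_two_pi, sin_pi_div_two]
  norm_num

theorem radialMoment_cos_pos : 0 < radialMoment fun t => cos (t - π / 2) := by
  refine radialMoment_pos (by fun_prop) (t₀ := 5 * π / 2)
    ⟨by linarith [pi_pos], by linarith [pi_pos]⟩ ?_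
  rw [show 5 * π / 2 - π / 2 = 2 * π by ring, cos_two_pi]
  norm_num

theorem tendsto_mul_rpow_half_mul_rpow_neg_three_halves (a b : ℝ) :
    Tendsto (fun x : ℝ => (a * x ^ ((1 : ℝ) / 2) + 1) * (b * x ^ (-(3 : ℝ) / 2)))
      atTop (𝓝 0) := by
  have hlim := ((tendsto_rpow_neg_atTop one_pos).const_mul (a * b)).add
    ((tendsto_rpow_neg_atTop (by norm_num : (0 : ℝ) < 3 / 2)).const_mul b)
  rw [mul_zero, mul_zero, add_zero] at hlim
  refine hlim.congr' ?_
  filter_upwards [eventually_gt_atTop 0] with x hx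
  have hprod : x ^ ((1 : ℝ) / 2) * x ^ (-(3 / 2) : ℝ) = x ^ (-1 : ℝ) := by
    rw [← rpow_add hx]
    norm_num
  rw [neg_div, ← hprod]
  ring

theorem stmt18_general (B : ℝ) :
    (∃ c C : ℝ, 0 < c ∧ c < C ∧ ∀ n : ℕ, 1 ≤ n →
        (c * (n : ℝ) ^ ((1 : ℝ) / 2) ≤ ∫ x, (pex n B x - B) ^ 2)
        ∧ ((∫ x, (pex n B x - B) ^ 2) ≤ C * (n : ℝ) ^ ((1 : ℝ) / 2))
        ∧ (c * (n : ℝ) ^ (-(3 : ℝ) / 2) ≤ ∫ x, ‖gradient (pex n B) x‖ ^ 2)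
        ∧ ((∫ x, ‖gradient (pex n B) x‖ ^ 2) ≤ C * (n : ℝ) ^ (-(3 : ℝ) / 2)))
    ∧ Tendsto (fun n : ℕ =>
        ((1 + 1 / B) * ((∫ x, (pex n B x - B) ^ 2) + B * ∫ x, ‖vex n x‖ ^ 2) + 1)
          * (2 * (1 + 1 / B) * ((∫ x, ‖gradient (pex n B) x‖ ^ 2)
              + B * ∫ x, (div3 (vex n) x) ^ 2)))
        atTop (nhds 0)
    ∧ Tendsto (fun n : ℕ => ∫ x, (pex n B x - B) ^ 2) atTop atTop := by
  set σ := 3 * volume.real (Metric.ball (0 : E3) 1)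
  set K₁ := radialMoment bump
  set K₂ := radialMoment fun t => cos (t - π / 2)
  set K₃ := radialMoment fun t => cos (t - π / 2) + 2 * bump t / t
  have hσ : 0 < σ := mul_pos three_pos <| ENNReal.toReal_pos
    (Metric.measure_ball_pos volume 0 one_pos).ne' measure_ball_lt_top.ne
  have hK₁ : 0 < K₁ := radialMoment_bump_pos
  have hK₂ : 0 < K₂ := radialMoment_cos_pos
  refine ⟨⟨σ * min K₁ K₂, σ * (K₁ + K₂), by positivity,
    mul_lt_mul_of_pos_left ((min_le_left _ _).trans_lt (lt_add_of_pos_right _ hK₂)) hσ,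
    fun n hn => ?_⟩, ?_, ?_⟩
  · rw [integral_pex_sub_sq hn, integral_norm_gradient_pex_sq hn]
    refine ⟨?_, ?_, ?_, ?_⟩ <;> gcongr
    exacts [min_le_left _ _, by linarith, min_le_right _ _, by linarith]
  · refine ((tendsto_mul_rpow_half_mul_rpow_neg_three_halves ((1 + 1 / B) * (1 + B) * σ * K₁)
      (2 * (1 + 1 / B) * σ * (K₂ + B * K₃))).comp tendsto_natCast_atTop_atTop).congr' ?_
    filter_upwards [eventually_gt_atTop 0] with n hn
    simp only [Function.comp_apply, integral_pex_sub_sq hn, integral_norm_vex_sq hn,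
      integral_norm_gradient_pex_sq hn, integral_div3_vex_sq hn, σ, K₁, K₂, K₃]
    ring
  · refine (((tendsto_rpow_atTop (by norm_num : (0 : ℝ) < 1 / 2)).comp
      tendsto_natCast_atTop_atTop).const_mul_atTop (mul_pos hσ hK₁)).congr' ?_
    filter_upwards [eventually_gt_atTop 0] with n hn
    rw [Function.comp_apply, integral_pex_sub_sq hn]

/-- scaling of the 3D example data. There are constants `0 < c < C`,
independent of `n`, such that `c n^{1/2} ≤ ‖p₀ − B‖²_{L²} ≤ C n^{1/2}` and
`c n^{−3/2} ≤ ‖∇p₀‖²_{L²} ≤ C n^{−3/2}`; consequently, with `N₁` and `κ` as in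
Theorem 1.1, `N₁κ → 0` as `n → ∞` while `‖p₀ − B‖²_{L²} → ∞`. -/
theorem stmt18 (B : ℝ) (hB : 0 < B) :
    (∃ c C : ℝ, 0 < c ∧ c < C ∧ ∀ n : ℕ, 1 ≤ n →
        (c * (n : ℝ) ^ ((1 : ℝ) / 2) ≤ ∫ x, (pex n B x - B) ^ 2)
        ∧ ((∫ x, (pex n B x - B) ^ 2) ≤ C * (n : ℝ) ^ ((1 : ℝ) / 2))
        ∧ (c * (n : ℝ) ^ (-(3 : ℝ) / 2) ≤ ∫ x, ‖gradient (pex n B) x‖ ^ 2)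
        ∧ ((∫ x, ‖gradient (pex n B) x‖ ^ 2) ≤ C * (n : ℝ) ^ (-(3 : ℝ) / 2)))
    ∧ Tendsto (fun n : ℕ =>
        ((1 + 1 / B) * ((∫ x, (pex n B x - B) ^ 2) + B * ∫ x, ‖vex n x‖ ^ 2) + 1)
          * (2 * (1 + 1 / B) * ((∫ x, ‖gradient (pex n B) x‖ ^ 2)
              + B * ∫ x, (div3 (vex n) x) ^ 2)))
        atTop (nhds 0)
    ∧ Tendsto (fun n : ℕ => ∫ x, (pex n B x - B) ^ 2) atTop atTop :=
  stmt18_general B
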